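/- Let D be an integral domain with quotient field K and A a D-torsion-free D-algebra. Then A is WPC (i.e., for every a ∈ A there is a D-algebra homomorphism Int(D) → A sending X to a) if and only if f(a) ∈ A (inside A ⊗_D K) for every f ∈ Int(D) and every a ∈ A. -/

import Mathlib

/-!
Every `f ∈ Int(D)` has a multiple `s • f` with `0 ≠ s ∈ D` and coefficients in `D`, and `s` is
invertible in any `K`-algebra, so a `D`-algebra map from `Int(D)` to a `K`-algebra is determined
by the image of `X`. Hence if `φ : Int(D) → A` sends `X` to `a`, its composite with `A → K ⊗[D] A`
is evaluation at `1 ⊗ a`, and `f(a) = φ f ∈ A`. Conversely, `A → K ⊗[D] A` is injective since `A`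
is torsion-free, so evaluation at `1 ⊗ a`, which lands in `A`, factors through `A`.
-/

set_option linter.unusedSectionVars false
open Polynomial TensorProduct

variable (D K : Type*) [CommRing D] [IsDomain D] [Field K] [Algebra D K] [IsFractionRing D K]

/-- The ring of integer-valued polynomials `Int(D) ⊆ K[X]`. -/
noncomputable def IntD : Subalgebra D (Polynomial K) :=
  ⨅ a : D, Subalgebra.comap ((Polynomial.aeval (algebraMap D K a)).restrictScalars D)
    (Algebra.ofId D K).range

theorem mem_IntD {f : Polynomial K} :
    f ∈ IntD D K ↔
      ∀ a : D, ∃ d : D, algebraMap D K d = Polynomial.eval (algebraMap D K a) f := by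
  simp [IntD, Algebra.mem_iInf, Subalgebra.mem_comap, Algebra.ofId_apply, Algebra.mem_bot]

/-- `X` as an element of `Int(D)`. -/
noncomputable def Xint : IntD D K := ⟨Polynomial.X, (mem_IntD D K).mpr fun a => ⟨a, by simp⟩⟩

theorem Algebra.TensorProduct.includeRight_injective_of_isTorsionFree {R L M : Type*}
    [CommRing R] [CommRing L] [Algebra R L] [IsFractionRing R L] [CommRing M] [Algebra R M]
    [Module.IsTorsionFree R M] :
    Function.Injective (Algebra.TensorProduct.includeRight : M →ₐ[R] L ⊗[R] M) :=
  (IsLocalizedModule.injective_iff_isRegular (nonZeroDivisors R) (TensorProduct.mk R L M 1)).mpr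
    fun c => Module.IsTorsionFree.isSMulRegular (isRegular_iff_mem_nonZeroDivisors.mpr c.2)

theorem AlgHom.exists_comp_eq_of_injective {R A B C : Type*} [CommSemiring R] [Semiring A]
    [Algebra R A] [Semiring B] [Algebra R B] [Semiring C] [Algebra R C]
    (i : A →ₐ[R] B) (hi : Function.Injective i) (ψ : C →ₐ[R] B)
    (h : ∀ c, ψ c ∈ Set.range i) :
    ∃ φ : C →ₐ[R] A, i.comp φ = ψ :=
  ⟨(AlgEquiv.ofInjective i hi).symm.toAlgHom.comp (ψ.codRestrict i.range h), by
    ext c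
    exact congrArg Subtype.val ((AlgEquiv.ofInjective i hi).apply_symm_apply _)⟩

section
variable {D K}

theorem coe_aeval_Xint (g : D[X]) : (aeval (Xint D K) g : K[X]) = g.map (algebraMap D K) := by
  rw [← Subalgebra.coe_val, ← Polynomial.aeval_algHom_apply]
  rfl

theorem IntD.algHom_ext {B : Type*} [CommRing B] [Algebra K B] [Algebra D B]
    [IsScalarTower D K B] {φ ψ : IntD D K →ₐ[D] B} (h : φ (Xint D K) = ψ (Xint D K)) :
    φ = ψ := by
  ext F
  obtain ⟨s, hs, hsF⟩ := IsLocalization.integerNormalization_spec (nonZeroDivisors D) F.1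
  set g := IsLocalization.integerNormalization (nonZeroDivisors D) F.1
  have hg : s • F = aeval (Xint D K) g := Subtype.ext (by rw [coe_aeval_Xint, hsF]; rfl)
  have hunit : IsUnit (algebraMap D B s) := by
    rw [IsScalarTower.algebraMap_apply D K B]
    exact (IsFractionRing.to_map_ne_zero_of_mem_nonZeroDivisors hs).isUnit.map _
  apply hunit.mul_left_cancel
  rw [← Algebra.smul_def, ← Algebra.smul_def, ← map_smul, ← map_smul, hg,
    ← aeval_algHom_apply, ← aeval_algHom_apply, h]

noncomputable def IntD.aevalTensor {A : Type*} [CommRing A] [Algebra D A] (a : A) :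
    IntD D K →ₐ[D] K ⊗[D] A :=
  ((aeval ((1 : K) ⊗ₜ[D] a)).restrictScalars D).comp (IntD D K).val

theorem IntD.aevalTensor_Xint {A : Type*} [CommRing A] [Algebra D A] (a : A) :
    IntD.aevalTensor a (Xint D K) = Algebra.TensorProduct.includeRight a := by
  simp [IntD.aevalTensor, Xint]

end

theorem stmt_4 (A : Type*) [CommRing A] [Algebra D A] [NoZeroSMulDivisors D A] :
    (∀ a : A, ∃ φ : IntD D K →ₐ[D] A, φ (Xint D K) = a) ↔
      ∀ f ∈ IntD D K, ∀ a : A,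
        Polynomial.aeval ((1 : K) ⊗ₜ[D] a) f ∈
          Set.range (Algebra.TensorProduct.includeRight : A →ₐ[D] K ⊗[D] A) := by
  have hinj :=
    Algebra.TensorProduct.includeRight_injective_of_isTorsionFree (R := D) (L := K) (M := A)
  constructor
  · intro hWPC f hf a
    obtain ⟨φ, hφ⟩ := hWPC a
    have hcomp : Algebra.TensorProduct.includeRight.comp φ = IntD.aevalTensor a :=
      IntD.algHom_ext (by rw [IntD.aevalTensor_Xint, AlgHom.comp_apply, hφ])
    exact ⟨φ ⟨f, hf⟩, DFunLike.congr_fun hcomp ⟨f, hf⟩⟩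
  · intro h a
    obtain ⟨φ, hφ⟩ := AlgHom.exists_comp_eq_of_injective _ hinj (IntD.aevalTensor a)
      fun F => h F.1 F.2 a
    refine ⟨φ, hinj ?_⟩
    rw [← AlgHom.comp_apply, hφ, IntD.aevalTensor_Xint]
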